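/- Let c be real with -1 ≤ c < 1. Then the iterated integral Z_c(2) := ∫∫_{0<s<t<1} [(1-c)/((1-s)(1-cs))] · (1/t) ds dt converges and equals Li₂(1) - Li₂(c) = π²/6 - Li₂(c), where Li₂(x) = Σ_{n≥1} xⁿ/n² is the dilogarithm. -/

import Mathlib

/-!
For `|s| < 1` and `|c| ≤ 1` the integrand expands as a geometric series with nonnegative terms,
`(1 - c) / ((1 - s) * (1 - c * s)) * (1 / t) = ∑ₙ (1 - c ^ (n + 1)) * s ^ n / t`.
By monotone convergence and Tonelli the series may be integrated term by term over the simplex,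
and `∫₀¹ ∫₀ᵗ sⁿ / t ds dt = 1 / (n + 1) ^ 2`. Summing, `Z_c(2) = ζ(2) - Li₂(c)`.
-/

open MeasureTheory Set ENNReal

def openSimplex : Set (ℝ × ℝ) := {p | 0 < p.1 ∧ p.1 < p.2 ∧ p.2 < 1}

theorem measurableSet_openSimplex : MeasurableSet openSimplex :=
  (measurableSet_lt measurable_const measurable_fst).inter
    ((measurableSet_lt measurable_fst measurable_snd).inter
      (measurableSet_lt measurable_snd measurable_const))

theorem setLIntegral_openSimplex {F : ℝ × ℝ → ℝ≥0∞} (hF : Measurable F) :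
    ∫⁻ p in openSimplex, F p = ∫⁻ t in Ioo 0 1, ∫⁻ s in Ioo 0 t, F (s, t) := by
  rw [← lintegral_indicator measurableSet_openSimplex, Measure.volume_eq_prod,
    lintegral_prod_symm _ (hF.indicator measurableSet_openSimplex).aemeasurable,
    ← lintegral_indicator measurableSet_Ioo]
  refine lintegral_congr fun t => ?_
  by_cases ht : t ∈ Ioo 0 1
  · rw [indicator_of_mem ht, ← lintegral_indicator measurableSet_Ioo]
    refine lintegral_congr fun s => ?_
    by_cases hs : s ∈ Ioo 0 t
    · rw [indicator_of_mem hs,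
        indicator_of_mem (show (s, t) ∈ openSimplex from ⟨hs.1, hs.2, ht.2⟩)]
    · rw [indicator_of_notMem hs, indicator_of_notMem fun h => hs ⟨h.1, h.2.1⟩]
  · rw [indicator_of_notMem ht, ← lintegral_zero]
    exact lintegral_congr fun s => indicator_of_notMem (fun h => ht ⟨h.1.trans h.2.1, h.2.2⟩) _

theorem setLIntegral_Ioo_ofReal_mul_pow {a t : ℝ} (ha : 0 ≤ a) (ht : 0 ≤ t) (n : ℕ) :
    ∫⁻ s in Ioo 0 t, ENNReal.ofReal (a * s ^ n) = ENNReal.ofReal (a * t ^ (n + 1) / (n + 1)) := by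
  have hint : IntegrableOn (fun s : ℝ => a * s ^ n) (Ioo 0 t) :=
    (continuous_const.mul (continuous_pow n)).integrableOn_Icc.mono_set Ioo_subset_Icc_self
  have hnonneg : 0 ≤ᵐ[volume.restrict (Ioo 0 t)] fun s => a * s ^ n :=
    ae_restrict_of_forall_mem measurableSet_Ioo fun s hs => by have := hs.1; positivity
  rw [← ofReal_integral_eq_lintegral_ofReal hint hnonneg, ← integral_Ioc_eq_integral_Ioo,
    ← intervalIntegral.integral_of_le ht, intervalIntegral.integral_const_mul, integral_pow]
  simp [mul_div_assoc]

theorem setLIntegral_openSimplex_ofReal_mul_pow_div {a : ℝ} (ha : 0 ≤ a) (n : ℕ) :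
    ∫⁻ p in openSimplex, ENNReal.ofReal (a * p.1 ^ n / p.2) =
      ENNReal.ofReal (a / ((n : ℝ) + 1) ^ 2) := by
  have hinner : ∀ t ∈ Ioo (0 : ℝ) 1, ∫⁻ s in Ioo 0 t, ENNReal.ofReal (a * s ^ n / t) =
      ENNReal.ofReal (a / (n + 1) * t ^ n) := by
    intro t ht
    have ht0 := ht.1.ne'
    simp_rw [mul_div_right_comm a]
    rw [setLIntegral_Ioo_ofReal_mul_pow (div_nonneg ha ht.1.le) ht.1.le]
    congr 1
    field_simp
    ring
  rw [setLIntegral_openSimplex (by fun_prop), setLIntegral_congr_fun measurableSet_Ioo hinner,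
    setLIntegral_Ioo_ofReal_mul_pow (by positivity) zero_le_one, one_pow]
  congr 1
  field_simp

theorem hasSum_one_sub_pow_succ_mul_pow {c s : ℝ} (hs : |s| < 1) (hcs : |c * s| < 1) :
    HasSum (fun n : ℕ => (1 - c ^ (n + 1)) * s ^ n) ((1 - c) / ((1 - s) * (1 - c * s))) := by
  have hs1 : 1 - s ≠ 0 := by linarith [(abs_lt.mp hs).2]
  have hcs1 : 1 - c * s ≠ 0 := by linarith [(abs_lt.mp hcs).2]
  have h := (hasSum_geometric_of_abs_lt_one hs).sub
    ((hasSum_geometric_of_abs_lt_one hcs).mul_left c)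
  rw [show (1 - s)⁻¹ - c * (1 - c * s)⁻¹ = (1 - c) / ((1 - s) * (1 - c * s)) by
    rw [inv_eq_one_div, ← div_eq_mul_inv, div_sub_div _ _ hs1 hcs1]; ring_nf] at h
  exact h.congr_fun fun n => by ring

theorem hasSum_one_div_nat_add_one_sq :
    HasSum (fun n : ℕ => 1 / ((n : ℝ) + 1) ^ 2) (Real.pi ^ 2 / 6) := by
  simpa using (hasSum_nat_add_iff' 1).mpr hasSum_zeta_two

theorem summable_pow_succ_div_nat_add_one_sq {c : ℝ} (hc : |c| ≤ 1) :
    Summable fun n : ℕ => c ^ (n + 1) / ((n : ℝ) + 1) ^ 2 := by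
  refine hasSum_one_div_nat_add_one_sq.summable.of_norm_bounded fun n => ?_
  rw [Real.norm_eq_abs, abs_div, abs_pow c, abs_of_pos (by positivity : (0 : ℝ) < (n + 1) ^ 2)]
  gcongr
  exact pow_le_one₀ (abs_nonneg c) hc

theorem integrable_and_integral_eq_of_lintegral_ofReal_eq {α : Type*} [MeasurableSpace α]
    {μ : Measure α} {f : α → ℝ} {X : ℝ} (hf : AEStronglyMeasurable f μ) (hf0 : 0 ≤ᵐ[μ] f)
    (hX : 0 ≤ X) (h : ∫⁻ a, ENNReal.ofReal (f a) ∂μ = ENNReal.ofReal X) :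
    Integrable f μ ∧ ∫ a, f a ∂μ = X :=
  ⟨⟨hf, (hasFiniteIntegral_iff_ofReal hf0).mpr (h ▸ ofReal_lt_top)⟩,
    by rw [integral_eq_lintegral_of_nonneg_ae hf0 hf, h, toReal_ofReal hX]⟩

theorem one_sub_pow_succ_nonneg {c : ℝ} (hc : |c| ≤ 1) (n : ℕ) : 0 ≤ 1 - c ^ (n + 1) :=
  sub_nonneg.mpr ((le_abs_self _).trans (by rw [abs_pow]; exact pow_le_one₀ (abs_nonneg c) hc))

theorem hasSum_one_sub_pow_succ_div_nat_add_one_sq {c : ℝ} (hc : |c| ≤ 1) :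
    HasSum (fun n : ℕ => (1 - c ^ (n + 1)) / ((n : ℝ) + 1) ^ 2)
      (Real.pi ^ 2 / 6 - ∑' n : ℕ, c ^ (n + 1) / ((n : ℝ) + 1) ^ 2) := by
  simpa only [sub_div] using
    hasSum_one_div_nat_add_one_sq.sub (summable_pow_succ_div_nat_add_one_sq hc).hasSum

theorem hasSum_Zc_integrand {c s : ℝ} (hc : |c| ≤ 1) (hs : |s| < 1) (t : ℝ) :
    HasSum (fun n : ℕ => (1 - c ^ (n + 1)) * s ^ n / t)
      ((1 - c) / ((1 - s) * (1 - c * s)) * (1 / t)) := by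
  have hcs : |c * s| < 1 := by
    rw [abs_mul]
    exact lt_of_le_of_lt (mul_le_of_le_one_left (abs_nonneg s) hc) hs
  rw [← div_eq_mul_one_div]
  exact (hasSum_one_sub_pow_succ_mul_pow hs hcs).div_const t

theorem abs_fst_lt_one_of_mem_openSimplex {p : ℝ × ℝ} (hp : p ∈ openSimplex) : |p.1| < 1 :=
  abs_lt.mpr ⟨by linarith [hp.1], hp.2.1.trans hp.2.2⟩

theorem Zc_integrand_term_nonneg {c : ℝ} (hc : |c| ≤ 1) {p : ℝ × ℝ} (hp : p ∈ openSimplex)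
    (n : ℕ) : 0 ≤ (1 - c ^ (n + 1)) * p.1 ^ n / p.2 := by
  have := one_sub_pow_succ_nonneg hc n
  have := hp.1
  have := hp.1.trans hp.2.1
  positivity

theorem setLIntegral_openSimplex_ofReal_Zc_integrand {c : ℝ} (hc : |c| ≤ 1) :
    ∫⁻ p in openSimplex, ENNReal.ofReal ((1 - c) / ((1 - p.1) * (1 - c * p.1)) * (1 / p.2)) =
      ENNReal.ofReal (Real.pi ^ 2 / 6 - ∑' n : ℕ, c ^ (n + 1) / ((n : ℝ) + 1) ^ 2) := by
  have hsum := hasSum_one_sub_pow_succ_div_nat_add_one_sq hc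
  calc _ = ∫⁻ p in openSimplex, ∑' n : ℕ, ENNReal.ofReal ((1 - c ^ (n + 1)) * p.1 ^ n / p.2) :=
        setLIntegral_congr_fun measurableSet_openSimplex fun p hp => by
          have hp_sum := hasSum_Zc_integrand hc (abs_fst_lt_one_of_mem_openSimplex hp) p.2
          rw [← hp_sum.tsum_eq,
            ENNReal.ofReal_tsum_of_nonneg (Zc_integrand_term_nonneg hc hp) hp_sum.summable]
    _ = ∑' n : ℕ, ENNReal.ofReal ((1 - c ^ (n + 1)) / ((n : ℝ) + 1) ^ 2) := by
        rw [lintegral_tsum fun n => by fun_prop]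
        exact tsum_congr fun n =>
          setLIntegral_openSimplex_ofReal_mul_pow_div (one_sub_pow_succ_nonneg hc n) n
    _ = _ := by
        rw [← ENNReal.ofReal_tsum_of_nonneg
          (fun n => div_nonneg (one_sub_pow_succ_nonneg hc n) (by positivity))
          hsum.summable, hsum.tsum_eq]

theorem Zc2_eval (c : ℝ) (hc1 : -1 ≤ c) (hc2 : c < 1) :
    let S : Set (ℝ × ℝ) := {p | 0 < p.1 ∧ p.1 < p.2 ∧ p.2 < 1}
    let f : ℝ × ℝ → ℝ := fun p => (1 - c) / ((1 - p.1) * (1 - c * p.1)) * (1 / p.2)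
    IntegrableOn f S volume ∧
      (∫ p in S, f p) = Real.pi ^ 2 / 6 - ∑' n : ℕ, c ^ (n + 1) / ((n : ℝ) + 1) ^ 2 := by
  intro S f
  have hc : |c| ≤ 1 := abs_le.mpr ⟨hc1, hc2.le⟩
  have hf_nonneg : ∀ p ∈ openSimplex, 0 ≤ f p := fun p hp =>
    (hasSum_Zc_integrand hc (abs_fst_lt_one_of_mem_openSimplex hp) p.2).nonneg
      (Zc_integrand_term_nonneg hc hp)
  have hvalue_nonneg : 0 ≤ Real.pi ^ 2 / 6 - ∑' n : ℕ, c ^ (n + 1) / ((n : ℝ) + 1) ^ 2 :=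
    (hasSum_one_sub_pow_succ_div_nat_add_one_sq hc).nonneg fun n =>
      div_nonneg (one_sub_pow_succ_nonneg hc n) (by positivity)
  exact integrable_and_integral_eq_of_lintegral_ofReal_eq (by fun_prop)
    (ae_restrict_of_forall_mem measurableSet_openSimplex hf_nonneg) hvalue_nonneg
    (setLIntegral_openSimplex_ofReal_Zc_integrand hc)
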